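/- arXiv:math/0002079 — 2 statements merged into one kernel-verified Lean document; each statement's English description precedes it below -/
import Mathlib

section
/- For every nonzero u ∈ (ZMod 3)^5 with Q(u) = 0 and every nonzero c ∈ ZMod 3, the number of nonzero v ∈ (ZMod 3)^5 with B(u,v) = c and Q(v) = n equals 27, for each n = 0, 1, 2. -/
/-- The quadratic form `Q(u) = u₀² − u₁² − u₂² − u₃² − u₄²` on `(ZMod 3)^5`. -/
def Q (u : Fin 5 → ZMod 3) : ZMod 3 :=
  u 0 ^ 2 - u 1 ^ 2 - u 2 ^ 2 - u 3 ^ 2 - u 4 ^ 2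

/-- The bilinear form `B(u,v) = u₀v₀ − u₁v₁ − u₂v₂ − u₃v₃ − u₄v₄` on `(ZMod 3)^5`. -/
def B (u v : Fin 5 → ZMod 3) : ZMod 3 :=
  u 0 * v 0 - u 1 * v 1 - u 2 * v 2 - u 3 * v 3 - u 4 * v 4

lemma shift_card {β : Type*} [DecidableEq β] (f : (Fin 5 → ZMod 3) → β)
    (w : Fin 5 → ZMod 3) (g : β → β) (hg : Function.Injective g)
    (h : ∀ v, f (v + w) = g (f v)) (a : β) :
    (Finset.univ.filter fun v => f v = a).card
      = (Finset.univ.filter fun v => f v = g a).card := by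
  apply Finset.card_bij (fun v _ => v + w)
  · intro v hv
    simp only [Finset.mem_filter, Finset.mem_univ, true_and] at hv ⊢
    rw [h, hv]
  · intro v1 _ v2 _ he
    exact add_right_cancel he
  · intro v hv
    simp only [Finset.mem_filter, Finset.mem_univ, true_and] at hv
    refine ⟨v - w, ?_, by simp⟩
    simp only [Finset.mem_filter, Finset.mem_univ, true_and]
    apply hg
    rw [← h]
    simpa using hv

lemma cycle_eq {h : ZMod 3 → ℕ} {d : ZMod 3} (hd : d ≠ 0)
    (H : ∀ a, h a = h (a + d)) (a b : ZMod 3) : h a = h b := by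
  have hd' := (by decide : ∀ x : ZMod 3, x ≠ 0 → x = 1 ∨ x = 2) d hd
  have ha := (by decide : ∀ x : ZMod 3, x = 0 ∨ x = 1 ∨ x = 2) a
  have hb := (by decide : ∀ x : ZMod 3, x = 0 ∨ x = 1 ∨ x = 2) b
  have h0 := H 0; have h1 := H 1; have h2 := H 2
  rcases hd' with rfl | rfl
  · rw [show (0 : ZMod 3) + 1 = 1 by decide] at h0
    rw [show (1 : ZMod 3) + 1 = 2 by decide] at h1
    rw [show (2 : ZMod 3) + 1 = 0 by decide] at h2
    rcases ha with rfl | rfl | rfl <;> rcases hb with rfl | rfl | rfl <;> omega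
  · rw [show (0 : ZMod 3) + 2 = 2 by decide] at h0
    rw [show (1 : ZMod 3) + 2 = 0 by decide] at h1
    rw [show (2 : ZMod 3) + 2 = 1 by decide] at h2
    rcases ha with rfl | rfl | rfl <;> rcases hb with rfl | rfl | rfl <;> omega

lemma sum_zmod3 (h : ZMod 3 → ℕ) : ∑ a : ZMod 3, h a = h 0 + h 1 + h 2 := by
  have : (Finset.univ : Finset (ZMod 3)) = {0, 1, 2} := by decide
  rw [this, Finset.sum_insert (by decide), Finset.sum_insert (by decide),
    Finset.sum_singleton]
  ring

lemma fiber_card (u : Fin 5 → ZMod 3) (hu : u ≠ 0) (a : ZMod 3) :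
    (Finset.univ.filter fun v : Fin 5 → ZMod 3 => B u v = a).card = 81 := by
  obtain ⟨i, hi⟩ := Function.ne_iff.mp hu
  simp only [Pi.zero_apply] at hi
  set w : Fin 5 → ZMod 3 := Pi.single i 1 with hw
  set d : ZMod 3 := B u w with hd
  have hd0 : d ≠ 0 := by
    rw [hd, hw]
    fin_cases i <;> simp_all [B, Pi.single_apply, sub_eq_zero]
  have hshift : ∀ v, B u (v + w) = B u v + d := by
    intro v
    rw [hd]
    simp only [B, Pi.add_apply]
    ring
  have key : ∀ m : ZMod 3,
      (Finset.univ.filter fun v : Fin 5 → ZMod 3 => B u v = m).card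
        = (Finset.univ.filter fun v : Fin 5 → ZMod 3 => B u v = m + d).card := by
    intro m
    exact shift_card (fun v => B u v) w (fun x => x + d)
      (fun x y hxy => by simpa using hxy) hshift m
  have hall : ∀ m₁ m₂ : ZMod 3,
      (Finset.univ.filter fun v : Fin 5 → ZMod 3 => B u v = m₁).card
        = (Finset.univ.filter fun v : Fin 5 → ZMod 3 => B u v = m₂).card :=
    cycle_eq hd0 key
  have hsum : (Finset.univ : Finset (Fin 5 → ZMod 3)).card
      = ∑ b : ZMod 3, (Finset.univ.filter fun v : Fin 5 → ZMod 3 => B u v = b).card :=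
    Finset.card_eq_sum_card_fiberwise (fun v _ => Finset.mem_univ _)
  rw [Finset.card_univ] at hsum
  have hcard : Fintype.card (Fin 5 → ZMod 3) = 243 := by simp
  rw [hcard, sum_zmod3] at hsum
  rw [hall 0 a, hall 1 a, hall 2 a] at hsum
  omega

/-- For every nonzero `u` with `Q u = 0` and every nonzero `c : ZMod 3`, the number of
nonzero `v` with `B u v = c` and `Q v = n` is 27, for each `n = 0, 1, 2`. -/
theorem count_type0_nonperp (u : Fin 5 → ZMod 3) (hu : u ≠ 0) (hQ : Q u = 0)
    (c : ZMod 3) (hc : c ≠ 0) :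
    ∀ n : ZMod 3, n = 0 ∨ n = 1 ∨ n = 2 →
      (Finset.univ.filter fun v : Fin 5 → ZMod 3 => v ≠ 0 ∧ B u v = c ∧ Q v = n).card = 27 := by
  intro n _
  have hQ' : u 0 ^ 2 - u 1 ^ 2 - u 2 ^ 2 - u 3 ^ 2 - u 4 ^ 2 = 0 := hQ
  have hdrop : (Finset.univ.filter fun v : Fin 5 → ZMod 3 => v ≠ 0 ∧ B u v = c ∧ Q v = n)
      = (Finset.univ.filter fun v : Fin 5 → ZMod 3 => B u v = c ∧ Q v = n) := by
    apply Finset.filter_congr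
    intro v _
    constructor
    · rintro ⟨_, h⟩; exact h
    · rintro ⟨hb, hq⟩
      refine ⟨?_, hb, hq⟩
      rintro rfl
      apply hc
      rw [← hb]; simp [B]
  rw [hdrop]
  -- joint fibers shift under translation by u
  have hshift : ∀ v : Fin 5 → ZMod 3,
      (fun v => (B u v, Q v)) (v + u)
        = (fun p : ZMod 3 × ZMod 3 => (p.1, p.2 + 2 * p.1)) ((fun v => (B u v, Q v)) v) := by
    intro v
    simp only [Prod.mk.injEq]
    constructor
    · simp only [B, Pi.add_apply]
      linear_combination hQ'
    · simp only [B, Q, Pi.add_apply]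
      linear_combination hQ'
  have hg : Function.Injective (fun p : ZMod 3 × ZMod 3 => (p.1, p.2 + 2 * p.1)) := by
    intro p q hpq
    simp only [Prod.mk.injEq] at hpq
    obtain ⟨h1, h2⟩ := hpq
    rw [h1] at h2
    exact Prod.ext h1 (add_right_cancel h2)
  have key : ∀ m : ZMod 3,
      (Finset.univ.filter fun v : Fin 5 → ZMod 3 => B u v = c ∧ Q v = m).card
        = (Finset.univ.filter fun v : Fin 5 → ZMod 3 => B u v = c ∧ Q v = m + 2 * c).card := by
    intro m
    have := shift_card (fun v => (B u v, Q v)) u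
      (fun p : ZMod 3 × ZMod 3 => (p.1, p.2 + 2 * p.1)) hg hshift (c, m)
    simpa [Prod.mk.injEq] using this
  have hd0 : (2 : ZMod 3) * c ≠ 0 := mul_ne_zero (by decide) hc
  have key' : ∀ m : ZMod 3,
      (fun m => (Finset.univ.filter fun v : Fin 5 → ZMod 3 => B u v = c ∧ Q v = m).card) m
        = (fun m => (Finset.univ.filter fun v : Fin 5 → ZMod 3 => B u v = c ∧ Q v = m).card)
            (m + 2 * c) := key
  have hall := cycle_eq hd0 key'
  have hsum : (Finset.univ.filter fun v : Fin 5 → ZMod 3 => B u v = c).card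
      = ∑ b : ZMod 3,
        ((Finset.univ.filter fun v : Fin 5 → ZMod 3 => B u v = c).filter
          fun v => Q v = b).card :=
    Finset.card_eq_sum_card_fiberwise (fun v _ => Finset.mem_univ _)
  simp only [Finset.filter_filter] at hsum
  rw [fiber_card u hu c, sum_zmod3] at hsum
  rw [hall 0 n, hall 1 n, hall 2 n] at hsum
  omega
end

section
/- In the ring of formal power series ℤ[[q]], the cube of the Euler product satisfies Jacobi's identity: ∏_{n=1}^{∞} (1 − qⁿ)³ = ∑_{n=0}^{∞} (−1)ⁿ (2n+1) q^{n(n+1)/2}. (Equivalently, η(τ)³ = ∑_{n∈ℤ} (4n+1) q^{(4n+1)²/8} after multiplying by q^{1/8}.) -/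
open PowerSeries Finset

/-!
Put `F(z) = ∏_{k ≤ 2m} (q^k - z)` over `ℤ[[q]]`. By the `q`-binomial theorem the coefficient
of `z^j` in `F` is `(-1)^j [2m+1, j]_q q^{C(2m+1-j, 2)}`. Compute `q^m F'(q^m)` in two ways. The
factor `q^m - z` vanishes at `z = q^m`, so the product rule gives
`(-1)^{m+1} q^{C(m,2) + m(m+1)} (q;q)_m²`. Expanding instead, the terms `j = m - t` and
`j = m + 1 + t` carry the same Gaussian binomial (by symmetry) and the same power of `q`, and
together give `(-1)^{m+1} q^{C(m,2) + m(m+1)} (-1)^t (2t+1) [2m+1, m+1+t]_q q^{C(t+1,2)}`.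
Finally `[2m+1, m-t]_q (q;q)_m ≡ 1 mod q^{m-t+1}`, because
`[n, j]_q (q;q)_j (q;q)_{n-j} = (q;q)_n`; multiplying the resulting formula for `(q;q)_m²` by
`(q;q)_m` gives `(q;q)_m³ ≡ ∑_{t ≤ m} (-1)^t (2t+1) q^{C(t+1,2)} mod q^{m+1}`.
-/

variable {R : Type*} [CommRing R]

noncomputable def qPochhammer (n : ℕ) : R⟦X⟧ := ∏ i ∈ range n, (1 - X ^ (i + 1))

theorem qPochhammer_succ (n : ℕ) :
    (qPochhammer (n + 1) : R⟦X⟧) = qPochhammer n * (1 - X ^ (n + 1)) :=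
  prod_range_succ _ n

theorem qPochhammer_add (a b : ℕ) :
    (qPochhammer (a + b) : R⟦X⟧) = qPochhammer a * ∏ i ∈ range b, (1 - X ^ (a + i + 1)) :=
  prod_range_add _ a b

theorem isUnit_qPochhammer (n : ℕ) : IsUnit (qPochhammer n : R⟦X⟧) :=
  IsUnit.prod_iff.mpr fun i _ => isUnit_iff_constantCoeff.mpr (by simp)

noncomputable def qBinomial : ℕ → ℕ → R⟦X⟧
  | _, 0 => 1
  | 0, _ + 1 => 0
  | n + 1, j + 1 => X ^ (j + 1) * qBinomial n (j + 1) + qBinomial n j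

@[simp]
theorem qBinomial_zero_right (n : ℕ) : (qBinomial n 0 : R⟦X⟧) = 1 := by
  cases n <;> rfl

theorem qBinomial_succ_succ (n j : ℕ) :
    (qBinomial (n + 1) (j + 1) : R⟦X⟧) = X ^ (j + 1) * qBinomial n (j + 1) + qBinomial n j :=
  rfl

theorem qBinomial_eq_zero_of_lt : ∀ {n j : ℕ}, n < j → (qBinomial n j : R⟦X⟧) = 0
  | 0, _ + 1, _ => rfl
  | n + 1, j + 1, h => by
    rw [qBinomial_succ_succ, qBinomial_eq_zero_of_lt (by omega),
      qBinomial_eq_zero_of_lt (by omega), mul_zero, add_zero]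

@[simp]
theorem qBinomial_self : ∀ n : ℕ, (qBinomial n n : R⟦X⟧) = 1
  | 0 => rfl
  | n + 1 => by rw [qBinomial_succ_succ, qBinomial_eq_zero_of_lt n.lt_succ_self, qBinomial_self n,
      mul_zero, zero_add]

theorem qBinomial_mul_qPochhammer_mul_qPochhammer (j k : ℕ) :
    qBinomial (j + k) j * qPochhammer j * qPochhammer k = (qPochhammer (j + k) : R⟦X⟧) := by
  induction j generalizing k with
  | zero => simp [qPochhammer]
  | succ j ihj =>
    induction k with
    | zero => simp [qPochhammer]
    | succ k ihk =>
      have hj := ihj (k + 1)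
      rw [Nat.add_right_comm] at ihk
      rw [← add_assoc] at hj
      rw [show j + 1 + (k + 1) = j + k + 1 + 1 by omega, qBinomial_succ_succ,
        qPochhammer_succ (j + k + 1)]
      rw [qPochhammer_succ] at ihk hj ⊢
      rw [qPochhammer_succ k]
      linear_combination (X ^ (j + 1) * (1 - X ^ (k + 1))) * ihk + (1 - X ^ (j + 1)) * hj

theorem qBinomial_symm_add (j k : ℕ) :
    (qBinomial (j + k) j : R⟦X⟧) = qBinomial (j + k) k := by
  have hj := qBinomial_mul_qPochhammer_mul_qPochhammer (R := R) j k
  have hk := qBinomial_mul_qPochhammer_mul_qPochhammer (R := R) k j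
  rw [add_comm k j] at hk
  refine ((isUnit_qPochhammer j).mul (isUnit_qPochhammer k)).mul_right_cancel ?_
  linear_combination hj - hk

theorem qBinomial_mul_qPochhammer (j k : ℕ) :
    qBinomial (j + k) j * qPochhammer j =
      (∏ i ∈ range j, (1 - X ^ (k + i + 1)) : R⟦X⟧) := by
  refine (isUnit_qPochhammer k).mul_left_cancel ?_
  rw [← qPochhammer_add, add_comm k j, ← qBinomial_mul_qPochhammer_mul_qPochhammer]
  ring

theorem dvd_mul_sub_one {A : Type*} [CommRing A] {d a b : A} (ha : d ∣ a - 1)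
    (hb : d ∣ b - 1) : d ∣ a * b - 1 := by
  rw [show a * b - 1 = a * (b - 1) + (a - 1) by ring]
  exact dvd_add (hb.mul_left a) ha

theorem X_pow_dvd_prod_one_sub_X_pow_sub_one {r : ℕ} {s : Finset ℕ} {e : ℕ → ℕ}
    (h : ∀ i ∈ s, r ≤ e i) : (X ^ r : R⟦X⟧) ∣ ∏ i ∈ s, (1 - X ^ e i) - 1 :=
  prod_induction _ (fun a => (X ^ r : R⟦X⟧) ∣ a - 1) (fun _ _ => dvd_mul_sub_one) (by simp)
    fun i hi => by rw [sub_sub_cancel_left]; exact (pow_dvd_pow X (h i hi)).neg_right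

theorem X_pow_succ_dvd_qBinomial_mul_qPochhammer_sub_one {s k : ℕ} (hsk : s ≤ k) (t : ℕ) :
    (X ^ (s + 1) : R⟦X⟧) ∣ qBinomial (s + k) s * qPochhammer (s + t) - 1 := by
  rw [qPochhammer_add, ← mul_assoc, qBinomial_mul_qPochhammer]
  exact dvd_mul_sub_one (X_pow_dvd_prod_one_sub_X_pow_sub_one fun i _ => by omega)
    (X_pow_dvd_prod_one_sub_X_pow_sub_one fun i _ => by omega)

theorem coeff_prod_C_X_pow_sub_X (n j : ℕ) :
    (∏ k ∈ range n, (Polynomial.C (X ^ k) - Polynomial.X : Polynomial R⟦X⟧)).coeff j =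
      (-1) ^ j * qBinomial n j * X ^ (n - j).choose 2 := by
  induction n generalizing j with
  | zero => cases j <;> simp [qBinomial, Polynomial.coeff_one]
  | succ n ih =>
    rw [prod_range_succ, mul_sub, Polynomial.coeff_sub, Polynomial.coeff_mul_C]
    cases j with
    | zero =>
      simp only [ih, Polynomial.coeff_mul_X_zero, qBinomial_zero_right, Nat.sub_zero,
        Nat.choose_succ_succ', Nat.choose_one_right, pow_add]
      ring
    | succ j =>
      rw [Polynomial.coeff_mul_X, ih, ih]
      rcases lt_trichotomy j n with hjn | rfl | hnj
      · obtain ⟨d, rfl⟩ := Nat.exists_eq_add_of_lt hjn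
        rw [qBinomial_succ_succ (j + d + 1) j, show j + d + 1 + 1 - (j + 1) = d + 1 by omega,
          show j + d + 1 - (j + 1) = d by omega, show j + d + 1 - j = d + 1 by omega,
          Nat.choose_succ_succ', Nat.choose_one_right]
        ring
      · simp [qBinomial_eq_zero_of_lt, pow_succ]
      · simp [qBinomial_eq_zero_of_lt, hnj, show n < j + 1 by omega]

theorem prod_range_X_pow_sub_X_pow (m : ℕ) :
    ∏ k ∈ range m, ((X : R⟦X⟧) ^ k - X ^ m) = X ^ m.choose 2 * qPochhammer m := by
  have h : ∀ k ∈ range m, (X : R⟦X⟧) ^ k - X ^ m = X ^ k * (1 - X ^ (m - 1 - k + 1)) := by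
    intro k hk
    rw [mul_sub, mul_one, ← pow_add]
    have := mem_range.mp hk
    congr 2
    omega
  rw [prod_congr rfl h, prod_mul_distrib, prod_pow_eq_pow_sum, sum_range_id,
    ← Nat.choose_two_right, qPochhammer,
    prod_range_reflect (fun i => 1 - X ^ (i + 1) : ℕ → R⟦X⟧)]

theorem prod_range_X_pow_add_sub_X_pow (m : ℕ) :
    ∏ k ∈ range m, ((X : R⟦X⟧) ^ (m + (k + 1)) - X ^ m) =
      (-1) ^ m * X ^ (m * m) * qPochhammer m := by
  have h : ∀ k ∈ range m,
      (X : R⟦X⟧) ^ (m + (k + 1)) - X ^ m = -X ^ m * (1 - X ^ (k + 1)) :=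
    fun k _ => by ring
  rw [prod_congr rfl h, prod_mul_distrib, prod_const, card_range, neg_pow, ← pow_mul, qPochhammer]

theorem X_pow_mul_eval_derivative_prod_C_X_pow_sub_X (m : ℕ) :
    X ^ m * (∏ k ∈ range (2 * m + 1),
      (Polynomial.C (X ^ k) - Polynomial.X : Polynomial R⟦X⟧)).derivative.eval (X ^ m) =
      (-1 : R⟦X⟧) ^ (m + 1) * (X ^ (m.choose 2 + m * (m + 1)) * qPochhammer m ^ 2) := by
  rw [show 2 * m + 1 = m + (m + 1) by omega, prod_range_add, prod_range_succ', add_zero,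
    show ∀ a b c : Polynomial R⟦X⟧, a * (b * c) = c * (a * b) from fun a b c => by ring,
    Polynomial.derivative_mul]
  simp only [Polynomial.derivative_sub, Polynomial.derivative_C, Polynomial.derivative_X,
    Polynomial.eval_add, Polynomial.eval_mul, Polynomial.eval_sub, Polynomial.eval_C,
    Polynomial.eval_X, Polynomial.eval_prod, sub_self, zero_mul, add_zero, zero_sub,
    Polynomial.eval_neg, Polynomial.eval_one, prod_range_X_pow_sub_X_pow,
    prod_range_X_pow_add_sub_X_pow]
  ring

theorem Polynomial.mul_eval_derivative_eq_sum_range {A : Type*} [CommSemiring A]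
    {p : Polynomial A} {n : ℕ} (hp : p.natDegree < n) (x : A) :
    x * p.derivative.eval x = ∑ j ∈ range n, p.coeff j * j * x ^ j := by
  rw [Polynomial.derivative_eval, Polynomial.sum_over_range' _ (by simp) n hp, mul_sum]
  refine sum_congr rfl fun j _ => ?_
  cases j with
  | zero => simp
  | succ j => simp only [pow_succ, Nat.cast_add, Nat.cast_one, Nat.add_sub_cancel]; ring

theorem sum_range_two_mul_add_two_eq_sum_pairs {M : Type*} [AddCommMonoid M] (f : ℕ → M)
    (m : ℕ) :
    ∑ j ∈ range (2 * m + 2), f j = ∑ t ∈ range (m + 1), (f (m - t) + f (m + 1 + t)) := by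
  rw [show 2 * m + 2 = (m + 1) + (m + 1) by ring, sum_range_add, ← sum_range_reflect f (m + 1),
    ← sum_add_distrib, Nat.add_sub_cancel]

theorem X_pow_mul_eval_derivative_prod_C_X_pow_sub_X_eq_sum (m : ℕ) :
    X ^ m * (∏ k ∈ range (2 * m + 1),
      (Polynomial.C (X ^ k) - Polynomial.X : Polynomial R⟦X⟧)).derivative.eval (X ^ m) =
      ∑ t ∈ range (m + 1), (-1 : R⟦X⟧) ^ (m + 1) * (X ^ (m.choose 2 + m * (m + 1)) *
        ((-1) ^ t * (2 * (t : R⟦X⟧) + 1) * qBinomial (2 * m + 1) (m + 1 + t) *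
          X ^ (t + 1).choose 2)) := by
  have hdeg : (∏ k ∈ range (2 * m + 1),
      (Polynomial.C (X ^ k) - Polynomial.X : Polynomial R⟦X⟧)).natDegree < 2 * m + 2 :=
    Nat.lt_succ_of_le <| Polynomial.natDegree_le_iff_coeff_eq_zero.mpr fun j hj => by
      rw [coeff_prod_C_X_pow_sub_X, qBinomial_eq_zero_of_lt hj, mul_zero, zero_mul]
  rw [Polynomial.mul_eval_derivative_eq_sum_range hdeg, sum_range_two_mul_add_two_eq_sum_pairs]
  refine sum_congr rfl fun t ht => ?_
  obtain ⟨s, rfl⟩ := Nat.exists_eq_add_of_le' (mem_range_succ_iff.mp ht)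
  have hB : (qBinomial (2 * (s + t) + 1) s : R⟦X⟧) =
      qBinomial (2 * (s + t) + 1) (s + t + 1 + t) := by
    rw [show 2 * (s + t) + 1 = s + (s + t + 1 + t) by omega, qBinomial_symm_add]
  have hX₁ : (X : R⟦X⟧) ^ (2 * (s + t) + 1 - s).choose 2 * (X ^ (s + t)) ^ s =
      X ^ ((s + t).choose 2 + (s + t) * (s + t + 1)) * X ^ (t + 1).choose 2 := by
    rw [← pow_mul, ← pow_add, ← pow_add, show 2 * (s + t) + 1 - s = s + t + 1 + t by omega]
    congr 1
    qify; simp only [Nat.cast_choose_two]; push_cast; ring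
  have hX₂ : (X : R⟦X⟧) ^ (2 * (s + t) + 1 - (s + t + 1 + t)).choose 2 *
      (X ^ (s + t)) ^ (s + t + 1 + t) =
      X ^ ((s + t).choose 2 + (s + t) * (s + t + 1)) * X ^ (t + 1).choose 2 := by
    rw [← pow_mul, ← pow_add, ← pow_add, show 2 * (s + t) + 1 - (s + t + 1 + t) = s by omega]
    congr 1
    qify; simp only [Nat.cast_choose_two]; push_cast; ring
  have hsign : (-1 : R⟦X⟧) ^ (s + t + 1 + t) = -(-1) ^ s := by
    rw [show s + t + 1 + t = s + 1 + 2 * t by ring, pow_add, pow_mul]; simp [pow_succ]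
  have hsign' : (-1 : R⟦X⟧) ^ (s + t + 1) * (-1) ^ t = -(-1) ^ s := by
    rw [← pow_add, show s + t + 1 + t = s + 1 + 2 * t by ring, pow_add, pow_mul]; simp [pow_succ]
  rw [coeff_prod_C_X_pow_sub_X, coeff_prod_C_X_pow_sub_X, show s + t - t = s by omega, hB]
  push_cast
  set B : R⟦X⟧ := qBinomial (2 * (s + t) + 1) (s + t + 1 + t)
  set E : R⟦X⟧ := X ^ ((s + t).choose 2 + (s + t) * (s + t + 1)) * X ^ (t + 1).choose 2
  linear_combination (-1) ^ s * B * (s : R⟦X⟧) * hX₁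
    + (-1) ^ (s + t + 1 + t) * B * (s + t + 1 + t : R⟦X⟧) * hX₂
    + B * (s + t + 1 + t : R⟦X⟧) * E * hsign - (2 * t + 1 : R⟦X⟧) * B * E * hsign'

theorem qPochhammer_sq (m : ℕ) :
    (qPochhammer m : R⟦X⟧) ^ 2 = ∑ t ∈ range (m + 1),
      (-1) ^ t * (2 * (t : R⟦X⟧) + 1) * qBinomial (2 * m + 1) (m + 1 + t) *
        X ^ (t + 1).choose 2 := by
  have h := (X_pow_mul_eval_derivative_prod_C_X_pow_sub_X (R := R) m).symm.trans
    (X_pow_mul_eval_derivative_prod_C_X_pow_sub_X_eq_sum m)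
  rw [← mul_sum, ← mul_sum] at h
  exact X_pow_mul_cancel (((isUnit_neg_one (α := R⟦X⟧)).pow (m + 1)).mul_left_cancel h)

theorem le_choose_two_succ (t : ℕ) : t ≤ (t + 1).choose 2 := by
  rw [Nat.choose_succ_succ', Nat.choose_one_right]
  exact Nat.le_add_right t _

theorem X_pow_succ_dvd_qPochhammer_pow_three_sub (m : ℕ) :
    (X ^ (m + 1) : R⟦X⟧) ∣ qPochhammer m ^ 3 -
      ∑ t ∈ range (m + 1), C ((-1) ^ t * (2 * t + 1) : R) * X ^ (t + 1).choose 2 := by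
  rw [pow_succ (qPochhammer m), qPochhammer_sq, sum_mul, ← sum_sub_distrib]
  refine dvd_sum fun t ht => ?_
  obtain ⟨s, rfl⟩ := Nat.exists_eq_add_of_le' (mem_range_succ_iff.mp ht)
  have hB : (qBinomial (2 * (s + t) + 1) (s + t + 1 + t) : R⟦X⟧) =
      qBinomial (s + (s + t + 1 + t)) s := by
    rw [qBinomial_symm_add, show s + (s + t + 1 + t) = 2 * (s + t) + 1 by omega]
  have ht := le_choose_two_succ t
  calc (X ^ (s + t + 1) : R⟦X⟧) ∣ X ^ (t + 1).choose 2 * X ^ (s + 1) := by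
        rw [← pow_add]; exact pow_dvd_pow X (by omega)
    _ ∣ C ((-1) ^ t * (2 * t + 1) : R) * X ^ (t + 1).choose 2 *
        (qBinomial (s + (s + t + 1 + t)) s * qPochhammer (s + t) - 1) :=
      mul_dvd_mul (dvd_mul_left _ _)
        (X_pow_succ_dvd_qBinomial_mul_qPochhammer_sub_one (by omega) t)
    _ = _ := by
      simp only [map_mul, map_pow, map_neg, map_one, map_add, map_ofNat, map_natCast, hB]
      ring

/-- **Jacobi's identity** `∏_{n=1}^∞ (1 − qⁿ)³ = ∑_{n=0}^∞ (−1)ⁿ(2n+1) q^{n(n+1)/2}` in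
`ℤ[[q]]`, stated coefficientwise: both sides converge in the `q`-adic topology because each
coefficient of the partial products/sums stabilizes, and for every `k` the (stabilized)
`k`-th coefficients agree.  Concretely, for all `N ≥ k` the `k`-th coefficient of
`∏_{n=0}^{N} (1 − q^{n+1})³` equals the `k`-th coefficient of
`∑_{n=0}^{N} (−1)ⁿ(2n+1) q^{n(n+1)/2}`. -/
theorem jacobi_identity (k N : ℕ) (hkN : k ≤ N) :
    PowerSeries.coeff (R := ℤ) k (∏ n ∈ Finset.range (N + 1), (1 - (PowerSeries.X : ℤ⟦X⟧) ^ (n + 1)) ^ 3) =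
      PowerSeries.coeff (R := ℤ) k (∑ n ∈ Finset.range (N + 1),
        PowerSeries.C (R := ℤ) ((-1) ^ n * (2 * n + 1)) * (PowerSeries.X : ℤ⟦X⟧) ^ (n * (n + 1) / 2)) := by
  have htail : (X : ℤ⟦X⟧) ^ (N + 1) ∣
      C ((-1) ^ (N + 1) * (2 * (N + 1 : ℕ) + 1) : ℤ) * X ^ (N + 1 + 1).choose 2 :=
    (pow_dvd_pow X (le_choose_two_succ (N + 1))).mul_left _
  have hdvd := dvd_add ((pow_dvd_pow X (Nat.le_succ _)).trans
    (X_pow_succ_dvd_qPochhammer_pow_three_sub (R := ℤ) (N + 1))) htail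
  rw [sum_range_succ, sub_add_eq_sub_sub, sub_add_cancel, qPochhammer, ← prod_pow] at hdvd
  rw [← sub_eq_zero, ← map_sub]
  convert X_pow_dvd_iff.mp hdvd k (Nat.lt_succ_of_le hkN) using 5 with n
  rw [Nat.choose_two_right, Nat.add_sub_cancel, mul_comm]
end
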